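/- Let t > 1 and define U_t : [0,2π] → ℝ by U_t(x) = −sin(Ψ_t^{−1}(x)). Then there exists Δ_t > 0 (depending on t) and a real-analytic function Ū : (−Δ_t, 2π + Δ_t) → ℝ such that Ū(x) = U_t(x) for all x ∈ [0,2π]. -/

import Mathlib

/-!
`Ψ_t(y) = y - t sin y` is entire with `Ψ_t' = 1 - t cos y`. On `[x_t, 2π - x_t]` we have
`cos y ≤ cos x_t`, and `t cos x_t < 1` because `t cos x_t sin x_t = x_t cos x_t < sin x_t`; so
`Ψ_t' > 0` on a slightly larger open interval `I`. There `Ψ_t` is strictly increasing, its image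
is an open set containing `[0, 2π]`, and the analytic inverse function theorem makes the inverse
of `Ψ_t|_I` analytic on that image; composing with `-sin` gives the extension.
-/

open Real Set Filter Topology Function
open scoped ContDiff

theorem AnalyticAt.analyticAt_of_eventually_leftInverse {𝕂 E F : Type*} [RCLike 𝕂]
    [NormedAddCommGroup E] [NormedSpace 𝕂 E] [CompleteSpace E]
    [NormedAddCommGroup F] [NormedSpace 𝕂 F] [CompleteSpace F]
    {f : E → F} {g : F → E} {f' : E ≃L[𝕂] F} {a : E}
    (hf : AnalyticAt 𝕂 f a) (hf' : HasFDerivAt f (f' : E →L[𝕂] F) a)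
    (hg : ∀ᶠ x in 𝓝 a, g (f x) = x) : AnalyticAt 𝕂 g (f a) := by
  have hfω : ContDiffAt 𝕂 ω f a := hf.contDiffAt
  have hinv := hfω.to_localInverse hf' (by simp)
  exact (hinv.congr_of_eventuallyEq
    ((hfω.hasStrictFDerivAt' hf' (by simp)).localInverse_unique hg)).analyticAt

theorem AnalyticOnNhd.isOpen_image_of_deriv_ne_zero {𝕜 : Type*} [NontriviallyNormedField 𝕜]
    [CompleteSpace 𝕜] {f : 𝕜 → 𝕜} {s : Set 𝕜} (hf : AnalyticOnNhd 𝕜 f s) (hs : IsOpen s)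
    (hf' : ∀ y ∈ s, deriv f y ≠ 0) : IsOpen (f '' s) := by
  refine isOpen_iff_mem_nhds.2 ?_
  rintro _ ⟨y, hy, rfl⟩
  rw [← (hf y hy).hasStrictDerivAt.map_nhds_eq (hf' y hy)]
  exact image_mem_map (hs.mem_nhds hy)

theorem AnalyticOnNhd.exists_leftInverse_of_deriv_pos {f : ℝ → ℝ} {s : Set ℝ}
    (hf : AnalyticOnNhd ℝ f s) (hs : IsOpen s) (hsc : Convex ℝ s)
    (hf' : ∀ y ∈ s, 0 < deriv f y) :
    ∃ g : ℝ → ℝ, AnalyticOnNhd ℝ g (f '' s) ∧ ∀ y ∈ s, g (f y) = y := by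
  have hinj : InjOn f s :=
    (strictMonoOn_of_deriv_pos hsc hf.continuousOn (by rwa [hs.interior_eq])).injOn
  have hleft : ∀ y ∈ s, invFunOn f s (f y) = y := fun y hy => hinj.leftInvOn_invFunOn hy
  refine ⟨invFunOn f s, ?_, hleft⟩
  rintro _ ⟨y, hy, rfl⟩
  exact (hf y hy).analyticAt_of_eventually_leftInverse
    ((hf y hy).differentiableAt.hasDerivAt.hasFDerivAt_equiv (hf' y hy).ne')
    (eventually_of_mem (hs.mem_nhds hy) hleft)

theorem IsOpen.exists_Ioo_sub_add_subset {s : Set ℝ} {a b : ℝ} (hs : IsOpen s) (hab : a ≤ b)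
    (hsub : Icc a b ⊆ s) : ∃ ε > 0, Ioo (a - ε) (b + ε) ⊆ s := by
  obtain ⟨εa, hεa, hballa⟩ := Metric.isOpen_iff.1 hs a (hsub ⟨le_rfl, hab⟩)
  obtain ⟨εb, hεb, hballb⟩ := Metric.isOpen_iff.1 hs b (hsub ⟨hab, le_rfl⟩)
  rw [Real.ball_eq_Ioo] at hballa hballb
  refine ⟨min εa εb, lt_min hεa hεb, fun y ⟨hy₁, hy₂⟩ => ?_⟩
  have := min_le_left εa εb
  have := min_le_right εa εb
  rcases lt_or_ge y a with hya | hya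
  · exact hballa ⟨by linarith, by linarith⟩
  rcases le_or_gt y b with hyb | hyb
  · exact hsub ⟨hya, hyb⟩
  · exact hballb ⟨by linarith, by linarith⟩

theorem mul_cos_lt_sin {x : ℝ} (hx₀ : 0 < x) (hxπ : x < π) : x * cos x < sin x := by
  rcases lt_or_ge x (π / 2) with hx | hx
  · have hcos : 0 < cos x := cos_pos_of_mem_Ioo ⟨by linarith, hx⟩
    have := mul_lt_mul_of_pos_right (lt_tan hx₀ hx) hcos
    rwa [tan_eq_sin_div_cos, div_mul_cancel₀ _ hcos.ne'] at this
  · have hcos : cos x ≤ 0 := cos_nonpos_of_pi_div_two_le_of_le hx (by linarith)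
    nlinarith [sin_pos_of_pos_of_lt_pi hx₀ hxπ]

theorem cos_le_cos_of_mem_Icc_two_pi_sub {x y : ℝ} (hx : 0 ≤ x) (hy : y ∈ Icc x (2 * π - x)) :
    cos y ≤ cos x := by
  rcases le_total y π with hyπ | hyπ
  · exact cos_le_cos_of_nonneg_of_le_pi hx hyπ hy.1
  · rw [← cos_two_pi_sub y]
    exact cos_le_cos_of_nonneg_of_le_pi hx (by linarith) (by linarith [hy.2])

theorem one_sub_mul_cos_pos {t x y : ℝ} (hx : x ∈ Ioo 0 π) (hxt : x = t * sin x)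
    (hy : y ∈ Icc x (2 * π - x)) : 0 < 1 - t * cos y := by
  have hsin : 0 < sin x := sin_pos_of_pos_of_lt_pi hx.1 hx.2
  have ht : 0 < t := pos_of_mul_pos_left (hxt ▸ hx.1) hsin.le
  have htcos : t * cos x < 1 := by
    refine lt_of_mul_lt_mul_right ?_ hsin.le
    calc t * cos x * sin x = x * cos x := by linear_combination -cos x * hxt
      _ < 1 * sin x := by rw [one_mul]; exact mul_cos_lt_sin hx.1 hx.2
  nlinarith [cos_le_cos_of_mem_Icc_two_pi_sub hx.1.le hy]

theorem burgers_profile_analytic_extension_general (t : ℝ)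
    (xt : ℝ) (hxt : xt ∈ Set.Ioo 0 π) (hxteq : xt = t * sin xt)
    (Ψinv : ℝ → ℝ)
    (hΨinv : ∀ x ∈ Set.Icc (0 : ℝ) (2 * π),
      Ψinv x ∈ Set.Icc xt (2 * π - xt) ∧ Ψinv x - t * sin (Ψinv x) = x) :
    ∃ Δ > (0 : ℝ), ∃ Ubar : ℝ → ℝ,
      AnalyticOnNhd ℝ Ubar (Set.Ioo (-Δ) (2 * π + Δ)) ∧
      ∀ x ∈ Set.Icc (0 : ℝ) (2 * π), Ubar x = -sin (Ψinv x) := by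
  set Ψ : ℝ → ℝ := fun y => y - t * sin y
  have hΨ' (y : ℝ) : deriv Ψ y = 1 - t * cos y :=
    ((hasDerivAt_id' y).sub ((hasDerivAt_sin y).const_mul t)).deriv
  have hxt_le : xt ≤ 2 * π - xt := by linarith [hxt.2]
  have hopen : IsOpen {y : ℝ | 0 < 1 - t * cos y} := isOpen_lt continuous_const (by fun_prop)
  obtain ⟨ε, hε, hpos⟩ := hopen.exists_Ioo_sub_add_subset hxt_le
    fun y hy => one_sub_mul_cos_pos hxt hxteq hy
  set I := Ioo (xt - ε) (2 * π - xt + ε)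
  have hΨana : AnalyticOnNhd ℝ Ψ I := fun y _ =>
    analyticAt_id.sub (analyticAt_const.mul analyticAt_sin)
  have hΨ'I : ∀ y ∈ I, 0 < deriv Ψ y := fun y hy => hΨ' y ▸ hpos hy
  obtain ⟨g, hg, hgΨ⟩ := hΨana.exists_leftInverse_of_deriv_pos isOpen_Ioo (convex_Ioo _ _) hΨ'I
  have hΨinvI : ∀ x ∈ Icc 0 (2 * π), Ψinv x ∈ I ∧ Ψ (Ψinv x) = x := fun x hx =>
    ⟨Icc_subset_Ioo (by linarith) (by linarith) (hΨinv x hx).1, (hΨinv x hx).2⟩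
  obtain ⟨Δ, hΔ, hsub⟩ := (hΨana.isOpen_image_of_deriv_ne_zero isOpen_Ioo
    fun y hy => (hΨ'I y hy).ne').exists_Ioo_sub_add_subset (by positivity)
    fun x hx => ⟨Ψinv x, hΨinvI x hx⟩
  refine ⟨Δ, hΔ, fun x => -sin (g x), fun x hx => ?_, fun x hx => ?_⟩
  · exact (analyticAt_sin.comp (hg x (hsub (by rwa [zero_sub])))).neg
  · obtain ⟨hmem, hΨx⟩ := hΨinvI x hx
    have hgx := hgΨ _ hmem
    rw [hΨx] at hgx
    simp only [hgx]

/-- **Lemma (analytic extension of the Burgers profile).** Let `t > 1`, let `x_t ∈ (0,π)` be the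
solution of `x_t = t·sin x_t` and let `Ψ_t⁻¹ : [0,2π] → [x_t, 2π - x_t]` be the inverse of the
bijection `Ψ_t(x₀) = x₀ - t·sin x₀`. Then `U_t(x) = -sin(Ψ_t⁻¹ x)` admits a real-analytic
extension to an open interval `(-Δ_t, 2π + Δ_t)` for some `Δ_t > 0`. -/
theorem burgers_profile_analytic_extension (t : ℝ) (ht : 1 < t)
    (xt : ℝ) (hxt : xt ∈ Set.Ioo 0 π) (hxteq : xt = t * sin xt)
    (Ψinv : ℝ → ℝ)
    (hΨinv : ∀ x ∈ Set.Icc (0 : ℝ) (2 * π),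
      Ψinv x ∈ Set.Icc xt (2 * π - xt) ∧ Ψinv x - t * sin (Ψinv x) = x) :
    ∃ Δ > (0 : ℝ), ∃ Ubar : ℝ → ℝ,
      AnalyticOnNhd ℝ Ubar (Set.Ioo (-Δ) (2 * π + Δ)) ∧
      ∀ x ∈ Set.Icc (0 : ℝ) (2 * π), Ubar x = -sin (Ψinv x) :=
  burgers_profile_analytic_extension_general t xt hxt hxteq Ψinv hΨinv
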